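/- The negated conditional independence atom x̄ ⊥̸_z̄ ȳ, with semantics: M ⊨_X x̄ ⊥̸_z̄ ȳ iff there exist s, s' ∈ X with s(z̄) = s'(z̄) such that no s'' ∈ X has both s''(x̄z̄) = s(x̄z̄) and s''(ȳz̄) = s'(ȳz̄), is logically equivalent to ∃p̄ q̄ r̄ (=(p̄q̄r̄) ∧ ◇(p̄r̄ = x̄z̄) ∧ ◇(q̄r̄ = ȳz̄) ∧ p̄q̄r̄ ≠ x̄ȳz̄), assuming models have at least two elements. -/

import Mathlib

/-- Formulas of first-order logic with team semantics, in negation normal form,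
over a relational signature `σ` (with arities `ar`) extended with dependency
atoms indexed by `δ` (with arities `dar`).  Equality and inequality literals
are between tuples of variables; variables are natural numbers. -/
inductive TForm (σ : Type) (ar : σ → ℕ) (δ : Type) (dar : δ → ℕ) : Type
  | rel (r : σ) (ts : Fin (ar r) → ℕ)
  | nrel (r : σ) (ts : Fin (ar r) → ℕ)
  | eq (k : ℕ) (x y : Fin k → ℕ)
  | neq (k : ℕ) (x y : Fin k → ℕ)
  | dep (d : δ) (xs : Fin (dar d) → ℕ)
  | and (φ ψ : TForm σ ar δ dar)
  | or (φ ψ : TForm σ ar δ dar)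
  | ex (v : ℕ) (φ : TForm σ ar δ dar)
  | all (v : ℕ) (φ : TForm σ ar δ dar)

/-- A team over a model with carrier `M`: a set of assignments. -/
abbrev Team (M : Type) := Set (ℕ → M)

/-- `X(x̄)`: the relation of values of the tuple `x̄` in the team `X`. -/
def Team.rel {M : Type} (X : Team M) {k : ℕ} (xs : Fin k → ℕ) : Set (Fin k → M) :=
  {t | ∃ s ∈ X, t = fun i => s (xs i)}

/-- An interpretation of a family of dependencies: for each index, an
isomorphism-invariant-style class of pairs (carrier, relation). -/
abbrev DepFam (δ : Type) (dar : δ → ℕ) := ∀ d : δ, ∀ M : Type, Set (Fin (dar d) → M) → Prop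

/-- Lax team semantics. -/
def tsat {σ : Type} {ar : σ → ℕ} {δ : Type} {dar : δ → ℕ} {M : Type}
    (RI : ∀ r : σ, Set (Fin (ar r) → M)) (DI : DepFam δ dar) :
    TForm σ ar δ dar → Team M → Prop
  | .rel r ts, X => ∀ s ∈ X, (fun i => s (ts i)) ∈ RI r
  | .nrel r ts, X => ∀ s ∈ X, (fun i => s (ts i)) ∉ RI r
  | .eq _ x y, X => ∀ s ∈ X, (fun i => s (x i)) = fun i => s (y i)
  | .neq _ x y, X => ∀ s ∈ X, (fun i => s (x i)) ≠ fun i => s (y i)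
  | .dep d xs, X => DI d M (X.rel xs)
  | .and φ ψ, X => tsat RI DI φ X ∧ tsat RI DI ψ X
  | .or φ ψ, X => ∃ Y Z, X = Y ∪ Z ∧ tsat RI DI φ Y ∧ tsat RI DI ψ Z
  | .ex v φ, X => ∃ H : (ℕ → M) → Set M, (∀ s ∈ X, (H s).Nonempty) ∧
      tsat RI DI φ {s' | ∃ s ∈ X, ∃ m ∈ H s, s' = Function.update s v m}
  | .all v φ, X => tsat RI DI φ {s' | ∃ s ∈ X, ∃ m : M, s' = Function.update s v m}

/-- Tarski (single-assignment) semantics; dependency atoms are treated as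
trivially true (they are only meaningful for first-order formulas). -/
def ssat {σ : Type} {ar : σ → ℕ} {δ : Type} {dar : δ → ℕ} {M : Type}
    (RI : ∀ r : σ, Set (Fin (ar r) → M)) :
    TForm σ ar δ dar → (ℕ → M) → Prop
  | .rel r ts, s => (fun i => s (ts i)) ∈ RI r
  | .nrel r ts, s => (fun i => s (ts i)) ∉ RI r
  | .eq _ x y, s => (fun i => s (x i)) = fun i => s (y i)
  | .neq _ x y, s => (fun i => s (x i)) ≠ fun i => s (y i)
  | .dep _ _, _ => True
  | .and φ ψ, s => ssat RI φ s ∧ ssat RI ψ s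
  | .or φ ψ, s => ssat RI φ s ∨ ssat RI ψ s
  | .ex v φ, s => ∃ m : M, ssat RI φ (Function.update s v m)
  | .all v φ, s => ∀ m : M, ssat RI φ (Function.update s v m)

/-- A formula is first-order if it contains no dependency atoms. -/
def TForm.isFO {σ : Type} {ar : σ → ℕ} {δ : Type} {dar : δ → ℕ} :
    TForm σ ar δ dar → Prop
  | .dep _ _ => False
  | .and φ ψ => φ.isFO ∧ ψ.isFO
  | .or φ ψ => φ.isFO ∧ ψ.isFO
  | .ex _ φ => φ.isFO
  | .all _ φ => φ.isFO
  | _ => True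

/-- Free variables of a formula. -/
def TForm.free {σ : Type} {ar : σ → ℕ} {δ : Type} {dar : δ → ℕ} :
    TForm σ ar δ dar → Set ℕ
  | .rel _ ts => Set.range ts
  | .nrel _ ts => Set.range ts
  | .eq _ x y => Set.range x ∪ Set.range y
  | .neq _ x y => Set.range x ∪ Set.range y
  | .dep _ xs => Set.range xs
  | .and φ ψ => φ.free ∪ ψ.free
  | .or φ ψ => φ.free ∪ ψ.free
  | .ex v φ => φ.free \ {v}
  | .all v φ => φ.free \ {v}

/-- The flattening `φᶠ`: replace every dependency atom by the trivially true
atom `⊤` (here rendered as the empty-tuple equality). -/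
def TForm.flatten {σ : Type} {ar : σ → ℕ} {δ : Type} {dar : δ → ℕ} :
    TForm σ ar δ dar → TForm σ ar δ dar
  | .dep _ _ => .eq 0 Fin.elim0 Fin.elim0
  | .and φ ψ => .and φ.flatten ψ.flatten
  | .or φ ψ => .or φ.flatten ψ.flatten
  | .ex v φ => .ex v φ.flatten
  | .all v φ => .all v φ.flatten
  | φ => φ

/-- Negation normal form of the negation of a (first-order) formula. -/
def TForm.neg {σ : Type} {ar : σ → ℕ} {δ : Type} {dar : δ → ℕ} :
    TForm σ ar δ dar → TForm σ ar δ dar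
  | .rel r ts => .nrel r ts
  | .nrel r ts => .rel r ts
  | .eq k x y => .neq k x y
  | .neq k x y => .eq k x y
  | .dep d xs => .dep d xs
  | .and φ ψ => .or φ.neg ψ.neg
  | .or φ ψ => .and φ.neg ψ.neg
  | .ex v φ => .all v φ.neg
  | .all v φ => .ex v φ.neg

/-- `(ψ ↾ θ) := (¬θ) ∨ (θ ∧ ψ)`. -/
def TForm.restrict {σ : Type} {ar : σ → ℕ} {δ : Type} {dar : δ → ℕ}
    (ψ θ : TForm σ ar δ dar) : TForm σ ar δ dar :=
  .or θ.neg (.and θ ψ)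

/-- A family of dependencies is upwards closed. -/
def UpClosed {δ : Type} {dar : δ → ℕ} (DI : DepFam δ dar) : Prop :=
  ∀ (d : δ) (M : Type) (R S : Set (Fin (dar d) → M)), R ⊆ S → DI d M R → DI d M S

/-- The constancy dependency of arity `n`. -/
def ConstD (n : ℕ) : ∀ M : Type, Set (Fin n → M) → Prop :=
  fun _ R => ∀ t ∈ R, ∀ t' ∈ R, t = t'

/-- Iterated existential quantification (outermost quantifier is `v 0`). -/
def TForm.exs {σ : Type} {ar : σ → ℕ} {δ : Type} {dar : δ → ℕ} :
    {n : ℕ} → (Fin n → ℕ) → TForm σ ar δ dar → TForm σ ar δ dar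
  | 0, _, φ => φ
  | _ + 1, v, φ => .ex (v 0) (TForm.exs (fun i => v i.succ) φ)

/-- The intersection dependency `◇(v̄ = w̄)` of arity `k + k`. -/
def IntersectD (k : ℕ) : ∀ M : Type, Set (Fin (k + k) → M) → Prop :=
  fun _ R => ∃ t ∈ R, (fun i : Fin k => t (Fin.castAdd k i)) = fun i => t (Fin.natAdd k i)

/-!
Given witnesses `s, s'` of `x̄ ⊥̸_z̄ ȳ`, give `p̄q̄r̄` the single value `s(x̄) s'(ȳ) s(z̄)` on the
whole team. Then `s` and `s'` witness the two `◇`-atoms, and an assignment with `p̄q̄r̄ = x̄ȳz̄` would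
agree with `s` on `x̄z̄` and with `s'` on `ȳz̄`. Conversely, the assignments witnessing the `◇`-atoms
give `s, s'` (they agree on `z̄` because both have `z̄ = r̄` and `r̄` is constant), and an `s''` as
forbidden by `x̄ ⊥̸_z̄ ȳ` would produce an assignment with `p̄q̄r̄ = x̄ȳz̄`. Throughout, freshness of
`p̄q̄r̄` means that quantifying them leaves the values of `x̄ȳz̄` unchanged.
-/

open Function Set

theorem Fin.append_inj {α : Type*} {m n : ℕ} {u u' : Fin m → α} {w w' : Fin n → α} :
    Fin.append u w = Fin.append u' w' ↔ u = u' ∧ w = w' :=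
  (Fin.appendEquiv m n).injective.eq_iff.trans Prod.mk_inj

theorem Fin.comp_append {α β : Type*} {m n : ℕ} (f : α → β) (u : Fin m → α) (w : Fin n → α) :
    f ∘ Fin.append u w = Fin.append (f ∘ u) (f ∘ w) := by
  funext i
  induction i using Fin.addCases <;> simp

theorem Set.EqOn.comp_eq_of_forall_ne {ι κ α β : Type*} {v : ι → α} {e s : α → β}
    (h : EqOn e s (range v)ᶜ) {x : κ → α} (hvx : ∀ i j, v i ≠ x j) : e ∘ x = s ∘ x :=
  funext fun j => h fun ⟨i, hi⟩ => hvx i j hi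

theorem Function.eqOn_extend_compl_range {ι α β : Type*} (v : ι → α) (t : ι → β) (s : α → β) :
    EqOn (extend v t s) s (range v)ᶜ :=
  fun w hw => extend_apply' t s w hw

theorem Function.extend_succ_update_zero {α β : Type*} [DecidableEq α] {n : ℕ}
    {v : Fin (n + 1) → α} (hv : Injective v) (t : Fin (n + 1) → β) (s : α → β) :
    extend (fun i : Fin n => v i.succ) (fun i => t i.succ) (update s (v 0) (t 0)) =
      extend v t s := by
  funext w
  by_cases hw : w ∈ range v
  · obtain ⟨i, rfl⟩ := hw
    rw [hv.extend_apply]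
    induction i using Fin.cases with
    | zero =>
      rw [extend_apply' _ _ _ fun ⟨j, hj⟩ => Fin.succ_ne_zero j (hv hj), update_self]
    | succ j => exact (hv.comp (Fin.succ_injective _)).extend_apply _ _ j
  · rw [extend_apply' _ _ _ hw, extend_apply' _ _ _ fun ⟨j, hj⟩ => hw ⟨j.succ, hj⟩,
      update_of_ne fun h => hw ⟨0, h.symm⟩]

section Teams

variable {σ : Type} {ar : σ → ℕ} {δ : Type} {dar : δ → ℕ} {M : Type}
  (RI : ∀ r : σ, Set (Fin (ar r) → M)) (DI : DepFam δ dar)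

theorem constD_rel_iff {n : ℕ} (X : Team M) (v : Fin n → ℕ) :
    ConstD n M (X.rel v) ↔ ∀ s ∈ X, ∀ s' ∈ X, s ∘ v = s' ∘ v := by
  constructor
  · intro h s hs s' hs'
    exact h _ ⟨s, hs, rfl⟩ _ ⟨s', hs', rfl⟩
  · rintro h _ ⟨s, hs, rfl⟩ _ ⟨s', hs', rfl⟩
    exact h s hs s' hs'

theorem intersectD_rel_append_iff {k : ℕ} (X : Team M) (v w : Fin k → ℕ) :
    IntersectD k M (X.rel (Fin.append v w)) ↔ ∃ s ∈ X, s ∘ v = s ∘ w := by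
  constructor
  · rintro ⟨_, ⟨s, hs, rfl⟩, h⟩
    exact ⟨s, hs, by simpa only [comp_def, Fin.append_left, Fin.append_right] using h⟩
  · rintro ⟨s, hs, h⟩
    exact ⟨_, ⟨s, hs, rfl⟩, by simpa only [comp_def, Fin.append_left, Fin.append_right] using h⟩

theorem tsat_exs_of_tsat_image_extend {n : ℕ} {v : Fin n → ℕ} (hv : Injective v)
    (t : Fin n → M) {φ : TForm σ ar δ dar} {X : Team M}
    (h : tsat RI DI φ (extend v t '' X)) : tsat RI DI (φ.exs v) X := by
  induction n generalizing X with
  | zero =>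
    have hid : extend v t = id := funext fun s => funext fun w =>
      extend_apply' t s w fun ⟨i, _⟩ => i.elim0
    rwa [hid, image_id] at h
  | succ n ih =>
    have hstep : extend (fun i : Fin n => v i.succ) (fun i => t i.succ) ''
        {s' | ∃ s ∈ X, ∃ m ∈ ({t 0} : Set M), s' = update s (v 0) m} = extend v t '' X := by
      ext e
      constructor
      · rintro ⟨_, ⟨s, hs, _, rfl, rfl⟩, rfl⟩
        exact ⟨s, hs, (extend_succ_update_zero hv t s).symm⟩
      · rintro ⟨s, hs, rfl⟩
        exact ⟨_, ⟨s, hs, t 0, rfl, rfl⟩, extend_succ_update_zero hv t s⟩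
    exact ⟨fun _ => {t 0}, fun _ _ => singleton_nonempty _,
      ih (hv.comp (Fin.succ_injective _)) _ (hstep ▸ h)⟩

theorem exists_of_tsat_exs {n : ℕ} {v : Fin n → ℕ} {φ : TForm σ ar δ dar} {X : Team M}
    (h : tsat RI DI (φ.exs v) X) :
    ∃ Y, tsat RI DI φ Y ∧ (∀ e ∈ Y, ∃ s ∈ X, EqOn e s (range v)ᶜ) ∧
      ∀ s ∈ X, ∃ e ∈ Y, EqOn e s (range v)ᶜ := by
  induction n generalizing X with
  | zero => exact ⟨X, h, fun e he => ⟨e, he, eqOn_refl _ _⟩, fun s hs => ⟨s, hs, eqOn_refl _ _⟩⟩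
  | succ n ih =>
    obtain ⟨H, hH, hsat⟩ := h
    obtain ⟨Y, hY, hYX, hXY⟩ := ih hsat
    have hsub : (range v)ᶜ ⊆ (range fun i : Fin n => v i.succ)ᶜ :=
      compl_subset_compl.mpr (range_comp_subset_range _ _)
    have hupd : ∀ (s : ℕ → M) (m : M), EqOn (update s (v 0) m) s (range v)ᶜ := fun s m w hw =>
      update_of_ne (fun h => hw ⟨0, h.symm⟩) _ _
    refine ⟨Y, hY, fun e he => ?_, fun s hs => ?_⟩
    · obtain ⟨_, ⟨s, hs, m, -, rfl⟩, hes⟩ := hYX e he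
      exact ⟨s, hs, (hes.mono hsub).trans (hupd s m)⟩
    · obtain ⟨m, hm⟩ := hH s hs
      obtain ⟨e, he, hes⟩ := hXY _ ⟨s, hs, m, hm, rfl⟩
      exact ⟨e, he, (hes.mono hsub).trans (hupd s m)⟩

end Teams

section NegCondIndep

variable {M : Type} {a b c : ℕ} {x p : Fin a → ℕ} {y q : Fin b → ℕ} {z r : Fin c → ℕ}

variable (x p y q z r) in
/-- The team semantics of `=(p̄q̄r̄) ∧ ◇(p̄r̄ = x̄z̄) ∧ ◇(q̄r̄ = ȳz̄) ∧ p̄q̄r̄ ≠ x̄ȳz̄`. -/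
def NegCondIndepMatrix (Y : Team M) : Prop :=
  (∀ e ∈ Y, ∀ e' ∈ Y, e ∘ p = e' ∘ p ∧ e ∘ q = e' ∘ q ∧ e ∘ r = e' ∘ r) ∧
    (∃ e ∈ Y, e ∘ p = e ∘ x ∧ e ∘ r = e ∘ z) ∧
    (∃ e ∈ Y, e ∘ q = e ∘ y ∧ e ∘ r = e ∘ z) ∧
    ∀ e ∈ Y, ¬(e ∘ p = e ∘ x ∧ e ∘ q = e ∘ y ∧ e ∘ r = e ∘ z)

theorem negCondIndepMatrix_image_extend (hinj : Injective (Fin.append p (Fin.append q r)))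
    (hfx : ∀ i j, Fin.append p (Fin.append q r) i ≠ x j)
    (hfy : ∀ i j, Fin.append p (Fin.append q r) i ≠ y j)
    (hfz : ∀ i j, Fin.append p (Fin.append q r) i ≠ z j)
    {X : Team M} {s s' : ℕ → M} (hs : s ∈ X) (hs' : s' ∈ X) (hz : s ∘ z = s' ∘ z)
    (hno : ∀ s'' ∈ X,
      ¬((s'' ∘ x = s ∘ x ∧ s'' ∘ z = s ∘ z) ∧ s'' ∘ y = s' ∘ y ∧ s'' ∘ z = s' ∘ z)) :
    NegCondIndepMatrix x p y q z r
      (extend (Fin.append p (Fin.append q r)) (Fin.append (s ∘ x) (Fin.append (s' ∘ y) (s ∘ z)))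
        '' X) := by
  set v := Fin.append p (Fin.append q r)
  set t := Fin.append (s ∘ x) (Fin.append (s' ∘ y) (s ∘ z))
  have hpqr (s₀ : ℕ → M) :
      extend v t s₀ ∘ p = s ∘ x ∧ extend v t s₀ ∘ q = s' ∘ y ∧ extend v t s₀ ∘ r = s ∘ z := by
    simpa only [v, t, Fin.comp_append, Fin.append_inj] using extend_comp hinj t s₀
  have hfresh (s₀ : ℕ → M) {k : ℕ} {w : Fin k → ℕ} (hvw : ∀ i j, v i ≠ w j) :
      extend v t s₀ ∘ w = s₀ ∘ w :=
    (eqOn_extend_compl_range v t s₀).comp_eq_of_forall_ne hvw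
  simp only [NegCondIndepMatrix, forall_mem_image, exists_mem_image, hpqr, hfresh _ hfx,
    hfresh _ hfy, hfresh _ hfz, and_self, implies_true, true_and]
  refine ⟨⟨s, hs, rfl, rfl⟩, ⟨s', hs', rfl, hz⟩, ?_⟩
  rintro s₀ hs₀ ⟨hx, hy, hz₀⟩
  exact hno s₀ hs₀ ⟨⟨hx.symm, hz₀.symm⟩, hy.symm, hz₀.symm.trans hz⟩

theorem negCondIndep_of_negCondIndepMatrix {X Y : Team M}
    (hYX : ∀ e ∈ Y, ∃ s ∈ X, e ∘ x = s ∘ x ∧ e ∘ y = s ∘ y ∧ e ∘ z = s ∘ z)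
    (hXY : ∀ s ∈ X, ∃ e ∈ Y, e ∘ x = s ∘ x ∧ e ∘ y = s ∘ y ∧ e ∘ z = s ∘ z)
    (hY : NegCondIndepMatrix x p y q z r Y) :
    ∃ s ∈ X, ∃ s' ∈ X, s ∘ z = s' ∘ z ∧ ∀ s'' ∈ X,
      ¬((s'' ∘ x = s ∘ x ∧ s'' ∘ z = s ∘ z) ∧ s'' ∘ y = s' ∘ y ∧ s'' ∘ z = s' ∘ z) := by
  obtain ⟨hconst, ⟨e₁, he₁, hpx₁, hrz₁⟩, ⟨e₂, he₂, hqy₂, hrz₂⟩, hne⟩ := hY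
  obtain ⟨s, hs, hxs, -, hzs⟩ := hYX e₁ he₁
  obtain ⟨s', hs', -, hys', hzs'⟩ := hYX e₂ he₂
  refine ⟨s, hs, s', hs', ?_, ?_⟩
  · rw [← hzs, ← hzs', ← hrz₁, ← hrz₂, (hconst e₁ he₁ e₂ he₂).2.2]
  · rintro s'' hs'' ⟨⟨hx, hz⟩, hy, -⟩
    obtain ⟨e, he, hxe, hye, hze⟩ := hXY s'' hs''
    obtain ⟨hp, -, hr⟩ := hconst e he e₁ he₁
    obtain ⟨-, hq, -⟩ := hconst e he e₂ he₂
    exact hne e he ⟨by rw [hp, hpx₁, hxe, hx, hxs], by rw [hq, hqy₂, hye, hy, hys'],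
      by rw [hr, hrz₁, hze, hz, hzs]⟩

end NegCondIndep

theorem neg_cond_independence_def {σ : Type} {ar : σ → ℕ} {M : Type}
    (RI : ∀ r : σ, Set (Fin (ar r) → M))
    {a b c : ℕ} (x p : Fin a → ℕ) (y q : Fin b → ℕ) (z r : Fin c → ℕ)
    (hinj : Function.Injective (Fin.append p (Fin.append q r)))
    (hfx : ∀ i j, Fin.append p (Fin.append q r) i ≠ x j)
    (hfy : ∀ i j, Fin.append p (Fin.append q r) i ≠ y j)
    (hfz : ∀ i j, Fin.append p (Fin.append q r) i ≠ z j)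
    (X : Team M) :
    (∃ s ∈ X, ∃ s' ∈ X, (fun i => s (z i)) = (fun i => s' (z i)) ∧
      ∀ s'' ∈ X, ¬(((fun i => s'' (Fin.append x z i)) = fun i => s (Fin.append x z i)) ∧
        ((fun i => s'' (Fin.append y z i)) = fun i => s' (Fin.append y z i)))) ↔
    tsat RI
      (fun d : Option Bool => match d with
        | none => ConstD (a + (b + c))
        | some false => IntersectD (a + c)
        | some true => IntersectD (b + c))
      (TForm.exs
        (dar := fun d => match d with
          | none => a + (b + c)
          | some false => (a + c) + (a + c)
          | some true => (b + c) + (b + c))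
        (Fin.append p (Fin.append q r))
        (.and (.and (.and
          (.dep none (Fin.append p (Fin.append q r)))
          (.dep (some false) (Fin.append (Fin.append p r) (Fin.append x z))))
          (.dep (some true) (Fin.append (Fin.append q r) (Fin.append y z))))
          (.neq (a + (b + c)) (Fin.append p (Fin.append q r))
            (Fin.append x (Fin.append y z))))) X := by
  have hagree {e s : ℕ → M} (h : EqOn e s (range (Fin.append p (Fin.append q r)))ᶜ) :
      e ∘ x = s ∘ x ∧ e ∘ y = s ∘ y ∧ e ∘ z = s ∘ z :=
    ⟨h.comp_eq_of_forall_ne hfx, h.comp_eq_of_forall_ne hfy, h.comp_eq_of_forall_ne hfz⟩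
  simp only [← comp_def, Fin.comp_append, Fin.append_inj]
  constructor
  · rintro ⟨s, hs, s', hs', hz, hno⟩
    refine tsat_exs_of_tsat_image_extend RI _ hinj
      (Fin.append (s ∘ x) (Fin.append (s' ∘ y) (s ∘ z))) ?_
    simp only [tsat, constD_rel_iff, intersectD_rel_append_iff, ← comp_def, Fin.comp_append,
      Fin.append_inj, ne_eq, and_assoc]
    exact negCondIndepMatrix_image_extend hinj hfx hfy hfz hs hs' hz hno
  · intro h
    obtain ⟨Y, hY, hYX, hXY⟩ := exists_of_tsat_exs RI _ h
    simp only [tsat, constD_rel_iff, intersectD_rel_append_iff, ← comp_def, Fin.comp_append,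
      Fin.append_inj, ne_eq, and_assoc] at hY
    refine negCondIndep_of_negCondIndepMatrix (fun e he => ?_) (fun s hs => ?_) hY
    · obtain ⟨s, hs, hes⟩ := hYX e he
      exact ⟨s, hs, hagree hes⟩
    · obtain ⟨e, he, hes⟩ := hXY s hs
      exact ⟨e, he, hagree hes⟩
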